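/- arXiv:1609.06421 — 5 statements merged into one kernel-verified Lean document; each statement's English description precedes it below -/
import Mathlib

section
/- Let S : H → L² be a bounded linear operator and φ̇ : H → ℝ a nonzero bounded linear functional with Riesz representer r_φ. If r_φ ∈ R(S*), say r_φ = S*g with g ∈ L², then the generalized information I_φ := inf { ‖Sb‖² / (φ̇(b))² : b ∈ H, φ̇(b) ≠ 0, |φ̇(b)| ≤ 1 } is positive; in fact I_φ ≥ 1/‖g‖². -/
/-! Since `r = S† g`, every `b` satisfies `⟪b, r⟫ = ⟪S b, g⟫`, so Cauchy–Schwarz gives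
`⟪b, r⟫² ≤ ‖S b‖² ‖g‖²`: each ratio `‖S b‖² / ⟪b, r⟫²` is at least `1 / ‖g‖²`. The set of
ratios is nonempty because `b = r / ‖r‖²` has `⟪b, r⟫ = 1`, so the infimum is bounded below
by `1 / ‖g‖²`, which is positive since `g ≠ 0` (otherwise `r = 0`). -/

open ContinuousLinearMap

section

variable {H L : Type*} [NormedAddCommGroup H] [InnerProductSpace ℝ H] [CompleteSpace H]
  [NormedAddCommGroup L] [InnerProductSpace ℝ L] [CompleteSpace L]

theorem sq_inner_le_norm_sq_mul_norm_sq_of_adjoint_eq {S : H →L[ℝ] L} {g : L} {r : H}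
    (hg : adjoint S g = r) (b : H) :
    (inner ℝ b r : ℝ) ^ 2 ≤ ‖S b‖ ^ 2 * ‖g‖ ^ 2 := by
  rw [← hg, adjoint_inner_right, ← mul_pow, ← sq_abs]
  exact pow_le_pow_left₀ (abs_nonneg _) (abs_real_inner_le_norm _ _) 2

theorem one_div_norm_sq_le_div_of_adjoint_eq {S : H →L[ℝ] L} {g : L} {r : H}
    (hg : adjoint S g = r) {b : H} (hb : (inner ℝ b r : ℝ) ≠ 0) :
    1 / ‖g‖ ^ 2 ≤ ‖S b‖ ^ 2 / (inner ℝ b r : ℝ) ^ 2 := by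
  have hcs := sq_inner_le_norm_sq_mul_norm_sq_of_adjoint_eq hg b
  have hb2 : 0 < (inner ℝ b r : ℝ) ^ 2 := by positivity
  have hg2 : 0 < ‖g‖ ^ 2 := by
    by_contra! h
    nlinarith [sq_nonneg ‖S b‖, sq_nonneg ‖g‖]
  rw [div_le_div_iff₀ hg2 hb2]
  linarith

end

theorem exists_real_inner_eq_one {H : Type*} [NormedAddCommGroup H] [InnerProductSpace ℝ H]
    {r : H} (hr : r ≠ 0) : ∃ b : H, (inner ℝ b r : ℝ) = 1 := by
  refine ⟨(‖r‖ ^ 2)⁻¹ • r, ?_⟩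
  rw [real_inner_smul_left, real_inner_self_eq_norm_sq]
  exact inv_mul_cancel₀ (by positivity)

/-- If `r_φ = S*g`, then the Fisher information
`I_φ = inf { ‖Sb‖²/(φ̇ b)² : 0 < |φ̇ b| ≤ 1 }` satisfies `I_φ ≥ 1/‖g‖² > 0`. -/
theorem stmt3 {H L : Type*} [NormedAddCommGroup H] [InnerProductSpace ℝ H] [CompleteSpace H]
    [NormedAddCommGroup L] [InnerProductSpace ℝ L] [CompleteSpace L]
    (S : H →L[ℝ] L) (r : H) (g : L) (hr : r ≠ 0)
    (hg : ContinuousLinearMap.adjoint S g = r) :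
    1 / ‖g‖ ^ 2 ≤
        sInf {c : ℝ | ∃ b : H, (inner ℝ b r : ℝ) ≠ 0 ∧ |(inner ℝ b r : ℝ)| ≤ 1 ∧
          c = ‖S b‖ ^ 2 / (inner ℝ b r : ℝ) ^ 2} ∧
      0 < sInf {c : ℝ | ∃ b : H, (inner ℝ b r : ℝ) ≠ 0 ∧ |(inner ℝ b r : ℝ)| ≤ 1 ∧
          c = ‖S b‖ ^ 2 / (inner ℝ b r : ℝ) ^ 2} := by
  obtain ⟨b₁, hb₁⟩ := exists_real_inner_eq_one hr
  have hle : 1 / ‖g‖ ^ 2 ≤ sInf {c : ℝ | ∃ b : H, (inner ℝ b r : ℝ) ≠ 0 ∧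
      |(inner ℝ b r : ℝ)| ≤ 1 ∧ c = ‖S b‖ ^ 2 / (inner ℝ b r : ℝ) ^ 2} := by
    refine le_csInf ⟨_, b₁, by simp [hb₁], by simp [hb₁], rfl⟩ ?_
    rintro _ ⟨b, hb, -, rfl⟩
    exact one_div_norm_sq_le_div_of_adjoint_eq hg hb
  have hg₀ : g ≠ 0 := by
    rintro rfl
    exact hr (by simpa using hg.symm)
  exact ⟨hle, lt_of_lt_of_le (by positivity) hle⟩
end

section
/- Let S : H → L² be a bounded linear operator and φ̇ : H → ℝ a bounded linear functional with Riesz representer r_φ. If r_φ ∉ R(S*), then the Fisher information I_φ := inf { ‖Sb‖² / (φ̇(b))² : b ∈ H, 0 < |φ̇(b)| ≤ 1 } equals zero. -/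
/-!
If the Fisher information `c` were positive, then `c ⟪b, r⟫² ≤ ‖S b‖²` for every `b`
(normalize `b` so that `⟪b, r⟫ = 1`). Hence `b ↦ ⟪r, b⟫` is bounded by a multiple of `‖S b‖`,
so it factors through `S` as a bounded functional on `range S`; extending it by Hahn–Banach and
representing it by Riesz gives `u` with `S† u = r`.
-/

open ContinuousLinearMap

section Factorization

variable {𝕜 E F : Type*} [RCLike 𝕜] [NormedAddCommGroup E] [NormedSpace 𝕜 E]
  [NormedAddCommGroup F] [NormedSpace 𝕜 F]

theorem LinearMap.exists_strongDual_comp_eq_of_norm_le (S : E →ₗ[𝕜] F) (f : E →ₗ[𝕜] 𝕜) (C : ℝ)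
    (h : ∀ x, ‖f x‖ ≤ C * ‖S x‖) : ∃ g : StrongDual 𝕜 F, ∀ x, g (S x) = f x := by
  have hker : LinearMap.ker S ≤ LinearMap.ker f := fun x hx => by
    simpa [LinearMap.mem_ker.mp hx] using h x
  let g₀ : LinearMap.range S →ₗ[𝕜] 𝕜 := (LinearMap.ker S).liftQ f hker ∘ₗ S.quotKerEquivRange.symm
  have hg₀ : ∀ x, g₀ ⟨S x, LinearMap.mem_range_self S x⟩ = f x := fun x => by
    simp [g₀]
  have hbound : ∀ y, ‖g₀ y‖ ≤ C * ‖y‖ := by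
    rintro ⟨_, x, rfl⟩
    exact (hg₀ x).symm ▸ h x
  obtain ⟨g, hg, -⟩ := exists_extension_norm_eq _ (g₀.mkContinuous C hbound)
  exact ⟨g, fun x => (hg _).trans (hg₀ x)⟩

end Factorization

theorem mem_range_adjoint_of_norm_inner_le {𝕜 H L : Type*} [RCLike 𝕜]
    [NormedAddCommGroup H] [InnerProductSpace 𝕜 H] [CompleteSpace H]
    [NormedAddCommGroup L] [InnerProductSpace 𝕜 L] [CompleteSpace L]
    (S : H →L[𝕜] L) (r : H) (C : ℝ) (h : ∀ b, ‖inner 𝕜 r b‖ ≤ C * ‖S b‖) :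
    r ∈ LinearMap.range (adjoint S : L →ₗ[𝕜] H) := by
  obtain ⟨g, hg⟩ :=
    (S : H →ₗ[𝕜] L).exists_strongDual_comp_eq_of_norm_le (innerₛₗ 𝕜 r) C h
  refine ⟨(InnerProductSpace.toDual 𝕜 L).symm g, ext_inner_right 𝕜 fun b => ?_⟩
  simpa [adjoint_inner_left, InnerProductSpace.toDual_symm_apply] using hg b

section FisherInformation

variable {H L : Type*} [NormedAddCommGroup H] [InnerProductSpace ℝ H]
  [NormedAddCommGroup L] [NormedSpace ℝ L] (S : H →L[ℝ] L) (r : H)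

def fisherRatios : Set ℝ :=
  {c : ℝ | ∃ b : H, (inner ℝ b r : ℝ) ≠ 0 ∧ |(inner ℝ b r : ℝ)| ≤ 1 ∧
    c = ‖S b‖ ^ 2 / (inner ℝ b r : ℝ) ^ 2}

noncomputable def fisherInformation : ℝ :=
  sInf (fisherRatios S r)

theorem fisherRatios_subset_Ici : fisherRatios S r ⊆ Set.Ici 0 := by
  rintro _ ⟨b, -, -, rfl⟩
  exact Set.mem_Ici.mpr (by positivity)

theorem fisherInformation_nonneg : 0 ≤ fisherInformation S r :=
  Real.sInf_nonneg fun _ hc => fisherRatios_subset_Ici S r hc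

theorem fisherInformation_mul_inner_sq_le (b : H) :
    fisherInformation S r * inner ℝ b r ^ 2 ≤ ‖S b‖ ^ 2 := by
  set x := (inner ℝ b r : ℝ)
  rcases eq_or_ne x 0 with hx | hx
  · simp [hx]
  have hnormalized : inner ℝ (x⁻¹ • b) r = (1 : ℝ) := by
    rw [real_inner_smul_left, inv_mul_cancel₀ hx]
  have hle : fisherInformation S r ≤ ‖S (x⁻¹ • b)‖ ^ 2 / inner ℝ (x⁻¹ • b) r ^ 2 :=
    csInf_le ⟨0, fisherRatios_subset_Ici S r⟩
      ⟨x⁻¹ • b, by simp [hnormalized], by simp [hnormalized], rfl⟩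
  rw [hnormalized, map_smul, norm_smul, Real.norm_eq_abs, mul_pow, sq_abs, inv_pow, one_pow,
    div_one, inv_mul_eq_div] at hle
  exact (le_div_iff₀ (by positivity)).mp hle

end FisherInformation

/-- If `r_φ ∉ R(S*)`, the Fisher information
`I_φ = inf { ‖Sb‖²/(φ̇ b)² : 0 < |φ̇ b| ≤ 1 }` is zero. -/
theorem stmt4 {H L : Type*} [NormedAddCommGroup H] [InnerProductSpace ℝ H] [CompleteSpace H]
    [NormedAddCommGroup L] [InnerProductSpace ℝ L] [CompleteSpace L]
    (S : H →L[ℝ] L) (r : H)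
    (hr : r ∉ LinearMap.range (ContinuousLinearMap.adjoint S : L →ₗ[ℝ] H)) :
    sInf {c : ℝ | ∃ b : H, (inner ℝ b r : ℝ) ≠ 0 ∧ |(inner ℝ b r : ℝ)| ≤ 1 ∧
        c = ‖S b‖ ^ 2 / (inner ℝ b r : ℝ) ^ 2} = 0 := by
  change fisherInformation S r = 0
  refine le_antisymm (not_lt.mp fun hpos => hr ?_) (fisherInformation_nonneg S r)
  refine mem_range_adjoint_of_norm_inner_le S r (√(fisherInformation S r))⁻¹ fun b => ?_
  rw [le_inv_mul_iff₀ (Real.sqrt_pos.2 hpos), real_inner_comm, Real.norm_eq_abs,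
    ← Real.sqrt_sq_eq_abs, ← Real.sqrt_mul hpos.le, ← Real.sqrt_sq (norm_nonneg (S b))]
  exact Real.sqrt_le_sqrt (fisherInformation_mul_inner_sq_le S r b)
end

section
/- Let S : H → L² be compact with singular system {λ_j, φ_j, ψ_j}, and let 0 < β ≤ 1. Suppose r_φ ∈ cl(R(S*)) satisfies ‖r_φ‖_β² := Σ_j λ_j^{-2β} ⟨r_φ, φ_j⟩² < ∞. Then for all b ∈ H with ‖b‖_H ≤ 1, |⟨b, r_φ⟩| ≤ ‖r_φ‖_β · ‖Sb‖^β. In particular the generalized information I_{φ,ρ} with ρ = 1/β is positive. -/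
/-!
Expand `r = ∑ⱼ ⟪r, φⱼ⟫ φⱼ`, which is possible since `r` lies in the closed span of the `φⱼ`.
Writing `cⱼ = ⟪b, φⱼ⟫`, a weighted Cauchy–Schwarz inequality gives
`|⟪b, r⟫| ≤ ‖r‖_β (∑ⱼ λⱼ^{2β} cⱼ²)^{1/2}`. Hölder's inequality with exponents `1/β`, `1/(1-β)`
applied to `λⱼ^{2β} cⱼ² = (λⱼ² cⱼ²)^β (cⱼ²)^{1-β}`, together with Bessel's inequality for
`⟪ψⱼ, S b⟫ = λⱼ cⱼ`, bounds that sum by `‖S b‖^{2β} ‖b‖^{2(1-β)}`. Raising the resulting estimate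
to the power `2/β` bounds every element of the set from below by `‖r‖_β^{-2/β}`, and the set
contains the value at `b = r / ‖r‖`.
-/

open Real

theorem Real.summable_and_tsum_rpow_mul_rpow_le {ι : Type*} {f g : ι → ℝ}
    (hf0 : ∀ i, 0 ≤ f i) (hg0 : ∀ i, 0 ≤ g i) (hf : Summable f) (hg : Summable g)
    {θ : ℝ} (hθ0 : 0 < θ) (hθ1 : θ ≤ 1) :
    Summable (fun i => f i ^ θ * g i ^ (1 - θ)) ∧
      ∑' i, f i ^ θ * g i ^ (1 - θ) ≤ (∑' i, f i) ^ θ * (∑' i, g i) ^ (1 - θ) := by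
  rcases hθ1.lt_or_eq with hθ1 | rfl
  · have hpow : ∀ {x a : ℝ}, 0 ≤ x → 0 < a → (x ^ a) ^ a⁻¹ = x := fun hx ha =>
      rpow_rpow_inv hx ha.ne'
    have := summable_and_inner_le_Lp_mul_Lq_tsum_of_nonneg
      (HolderConjugate.inv_one_sub_inv hθ0 hθ1) (f := fun i => f i ^ θ)
      (g := fun i => g i ^ (1 - θ)) (fun i => rpow_nonneg (hf0 i) _)
      (fun i => rpow_nonneg (hg0 i) _)
    simpa only [hpow (hf0 _) hθ0, hpow (hg0 _) (sub_pos.2 hθ1), one_div, inv_inv, hf, hg,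
      true_imp_iff] using this
  · simp only [sub_self, rpow_zero, rpow_one, mul_one]
    exact ⟨hf, le_rfl⟩

theorem Real.abs_le_sqrt_tsum_mul_sqrt_tsum_of_hasSum {ι : Type*} {a c w : ι → ℝ} {s : ℝ}
    (hw : ∀ i, 0 < w i) (hs : HasSum (fun i => a i * c i) s)
    (ha : Summable fun i => (w i)⁻¹ * a i ^ 2) (hc : Summable fun i => w i * c i ^ 2) :
    |s| ≤ √(∑' i, (w i)⁻¹ * a i ^ 2) * √(∑' i, w i * c i ^ 2) := by
  have hterm : ∀ i, ((w i)⁻¹ * a i ^ 2) ^ (1 / 2 : ℝ) * (w i * c i ^ 2) ^ (1 - 1 / 2 : ℝ) =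
      |a i * c i| := fun i => by
    have hwi := hw i
    rw [show (1 - 1 / 2 : ℝ) = 1 / 2 by norm_num, ← mul_rpow (by positivity) (by positivity),
      ← sqrt_eq_rpow, ← sqrt_sq_eq_abs]
    congr 1
    field_simp
  have hf : ∀ i, 0 ≤ (w i)⁻¹ * a i ^ 2 := fun i => mul_nonneg (inv_nonneg.2 (hw i).le) (sq_nonneg _)
  have hg : ∀ i, 0 ≤ w i * c i ^ 2 := fun i => mul_nonneg (hw i).le (sq_nonneg _)
  obtain ⟨hsum, hle⟩ := summable_and_tsum_rpow_mul_rpow_le hf hg ha hc one_half_pos (by norm_num)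
  simp only [hterm] at hsum hle
  rw [show (1 - 1 / 2 : ℝ) = 1 / 2 by norm_num, ← sqrt_eq_rpow, ← sqrt_eq_rpow] at hle
  rw [← hs.tsum_eq]
  simp only [← Real.norm_eq_abs] at hsum hle ⊢
  exact (norm_tsum_le_tsum_norm hsum).trans hle

theorem Orthonormal.exists_hilbertBasis_topologicalClosure_span {ι 𝕜 E : Type*} [RCLike 𝕜]
    [NormedAddCommGroup E] [InnerProductSpace 𝕜 E] [CompleteSpace E] {v : ι → E}
    (hv : Orthonormal 𝕜 v) :
    ∃ b : HilbertBasis ι 𝕜 (Submodule.span 𝕜 (Set.range v)).topologicalClosure,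
      ∀ i, (b i : E) = v i := by
  set U := (Submodule.span 𝕜 (Set.range v)).topologicalClosure
  have hmem : ∀ i, v i ∈ U := fun i =>
    Submodule.le_topologicalClosure _ (Submodule.subset_span ⟨i, rfl⟩)
  set v' : ι → U := Set.codRestrict v U hmem
  have himage : Subtype.val '' (Submodule.span 𝕜 (Set.range v') : Set U) =
      Submodule.span 𝕜 (Set.range v) := by
    rw [← Submodule.coe_subtype, ← Submodule.map_coe, Submodule.map_span, ← Set.range_comp]
    rfl
  have hdense : Dense (Submodule.span 𝕜 (Set.range v') : Set U) :=
    Topology.IsInducing.subtypeVal.dense_iff.2 fun x => himage ▸ x.2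
  refine ⟨HilbertBasis.mk (hv.codRestrict U hmem) ?_, fun i => by rw [HilbertBasis.coe_mk]; rfl⟩
  exact (Submodule.dense_iff_topologicalClosure_eq_top.1 hdense).ge

theorem Orthonormal.hasSum_inner_mul_inner_of_mem_topologicalClosure_span {ι 𝕜 E : Type*}
    [RCLike 𝕜] [NormedAddCommGroup E] [InnerProductSpace 𝕜 E] [CompleteSpace E] {v : ι → E}
    (hv : Orthonormal 𝕜 v) {x : E} (hx : x ∈ (Submodule.span 𝕜 (Set.range v)).topologicalClosure)
    (y : E) : HasSum (fun i => inner 𝕜 y (v i) * inner 𝕜 (v i) x) (inner 𝕜 y x) := by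
  obtain ⟨b, hb⟩ := hv.exists_hilbertBasis_topologicalClosure_span
  simpa [hb] using b.hasSum_inner_mul_inner
    ((Submodule.span 𝕜 (Set.range v)).topologicalClosure.orthogonalProjectionOnto y) ⟨x, hx⟩

section SingularSystem

variable {H L : Type*} [NormedAddCommGroup H] [InnerProductSpace ℝ H] [CompleteSpace H]
  [NormedAddCommGroup L] [InnerProductSpace ℝ L] [CompleteSpace L]
  {S : H →L[ℝ] L} {lam : ℕ → ℝ} {φv : ℕ → H} {ψv : ℕ → L}

theorem summable_and_tsum_sq_mul_inner_sq_le
    (hSψ : ∀ j, ContinuousLinearMap.adjoint S (ψv j) = lam j • φv j)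
    (hONψ : Orthonormal ℝ ψv) (b : H) :
    Summable (fun j => lam j ^ 2 * inner ℝ b (φv j) ^ 2) ∧
      ∑' j, lam j ^ 2 * inner ℝ b (φv j) ^ 2 ≤ ‖S b‖ ^ 2 := by
  have hcoeff : ∀ j, ‖inner ℝ (ψv j) (S b)‖ ^ 2 = lam j ^ 2 * inner ℝ b (φv j) ^ 2 := fun j => by
    rw [← ContinuousLinearMap.adjoint_inner_left, hSψ, real_inner_smul_left, real_inner_comm,
      norm_eq_abs, sq_abs, mul_pow]
  simp only [← hcoeff]
  exact ⟨hONψ.inner_products_summable (S b), hONψ.tsum_inner_products_le (S b)⟩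

theorem summable_and_tsum_rpow_mul_inner_sq_le (hlam : ∀ j, 0 ≤ lam j)
    (hSψ : ∀ j, ContinuousLinearMap.adjoint S (ψv j) = lam j • φv j)
    (hONφ : Orthonormal ℝ φv) (hONψ : Orthonormal ℝ ψv) {β : ℝ} (hβ0 : 0 < β) (hβ1 : β ≤ 1)
    (b : H) :
    Summable (fun j => lam j ^ (2 * β) * inner ℝ b (φv j) ^ 2) ∧
      ∑' j, lam j ^ (2 * β) * inner ℝ b (φv j) ^ 2 ≤ (‖S b‖ ^ β * ‖b‖ ^ (1 - β)) ^ 2 := by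
  obtain ⟨hSsum, hSle⟩ := summable_and_tsum_sq_mul_inner_sq_le hSψ hONψ b
  have hcoeff : ∀ j, ‖inner ℝ (φv j) b‖ ^ 2 = inner ℝ b (φv j) ^ 2 := fun j => by
    rw [real_inner_comm, norm_eq_abs, sq_abs]
  have hbsum : Summable (fun j => inner ℝ b (φv j) ^ 2) := by
    simpa only [hcoeff] using hONφ.inner_products_summable b
  have hble : ∑' j, inner ℝ b (φv j) ^ 2 ≤ ‖b‖ ^ 2 := by
    simpa only [hcoeff] using hONφ.tsum_inner_products_le b
  have hterm : ∀ j, (lam j ^ 2 * inner ℝ b (φv j) ^ 2) ^ β * (inner ℝ b (φv j) ^ 2) ^ (1 - β) =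
      lam j ^ (2 * β) * inner ℝ b (φv j) ^ 2 := fun j => by
    rw [mul_rpow (sq_nonneg _) (sq_nonneg _), mul_assoc,
      ← rpow_add' (sq_nonneg _) (by simp), add_sub_cancel, rpow_one,
      ← rpow_natCast_mul (hlam j), Nat.cast_ofNat]
  obtain ⟨hsum, hle⟩ := summable_and_tsum_rpow_mul_rpow_le
    (fun j => mul_nonneg (sq_nonneg _) (sq_nonneg _)) (fun j => sq_nonneg _) hSsum hbsum hβ0 hβ1
  simp only [hterm] at hsum hle
  refine ⟨hsum, hle.trans ?_⟩
  calc (∑' j, lam j ^ 2 * inner ℝ b (φv j) ^ 2) ^ β * (∑' j, inner ℝ b (φv j) ^ 2) ^ (1 - β)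
      ≤ (‖S b‖ ^ 2) ^ β * (‖b‖ ^ 2) ^ (1 - β) := by
        have : 0 ≤ ∑' j, inner ℝ b (φv j) ^ 2 := tsum_nonneg fun j => sq_nonneg _
        have : 0 ≤ ∑' j, lam j ^ 2 * inner ℝ b (φv j) ^ 2 :=
          tsum_nonneg fun j => mul_nonneg (sq_nonneg _) (sq_nonneg _)
        have := sub_nonneg.2 hβ1
        gcongr
    _ = (‖S b‖ ^ β * ‖b‖ ^ (1 - β)) ^ 2 := by
        rw [mul_pow, rpow_pow_comm (norm_nonneg _), rpow_pow_comm (norm_nonneg _)]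

theorem abs_inner_le_sqrt_tsum_mul_rpow_mul_rpow (hlam : ∀ j, 0 < lam j)
    (hSψ : ∀ j, ContinuousLinearMap.adjoint S (ψv j) = lam j • φv j)
    (hONφ : Orthonormal ℝ φv) (hONψ : Orthonormal ℝ ψv) {β : ℝ} (hβ0 : 0 < β) (hβ1 : β ≤ 1)
    {r : H} (hr : r ∈ (Submodule.span ℝ (Set.range φv)).topologicalClosure)
    (hsum : Summable (fun j => lam j ^ (-(2 * β)) * inner ℝ r (φv j) ^ 2)) (b : H) :
    |inner ℝ b r| ≤
      √(∑' j, lam j ^ (-(2 * β)) * inner ℝ r (φv j) ^ 2) * (‖S b‖ ^ β * ‖b‖ ^ (1 - β)) := by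
  obtain ⟨hbsum, hble⟩ :=
    summable_and_tsum_rpow_mul_inner_sq_le (fun j => (hlam j).le) hSψ hONφ hONψ hβ0 hβ1 b
  have hexp : HasSum (fun j => inner ℝ r (φv j) * inner ℝ b (φv j)) (inner ℝ b r) := by
    simpa only [real_inner_comm r, mul_comm (inner ℝ b _)] using
      hONφ.hasSum_inner_mul_inner_of_mem_topologicalClosure_span hr b
  have hweight : ∀ j, (lam j ^ (2 * β))⁻¹ = lam j ^ (-(2 * β)) := fun j =>
    (rpow_neg (hlam j).le _).symm
  calc |inner ℝ b r|
      ≤ √(∑' j, lam j ^ (-(2 * β)) * inner ℝ r (φv j) ^ 2) *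
          √(∑' j, lam j ^ (2 * β) * inner ℝ b (φv j) ^ 2) := by
        simpa only [hweight] using abs_le_sqrt_tsum_mul_sqrt_tsum_of_hasSum
          (fun j => rpow_pos_of_pos (hlam j) (2 * β)) hexp (by simpa only [hweight] using hsum)
          hbsum
    _ ≤ √(∑' j, lam j ^ (-(2 * β)) * inner ℝ r (φv j) ^ 2) * (‖S b‖ ^ β * ‖b‖ ^ (1 - β)) := by
        gcongr
        exact (sqrt_le_sqrt hble).trans_eq (sqrt_sq (by positivity))

end SingularSystem

theorem sInf_pos_of_abs_inner_le_mul_rpow {H E : Type*} [NormedAddCommGroup H]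
    [InnerProductSpace ℝ H] [NormedAddCommGroup E] (T : H → E) {r : H} (hr : r ≠ 0)
    {β C : ℝ} (hβ : 0 < β) (hC : ∀ b : H, ‖b‖ ≤ 1 → |inner ℝ b r| ≤ C * ‖T b‖ ^ β) :
    0 < sInf {c : ℝ | ∃ b : H, ‖b‖ ≤ 1 ∧ inner ℝ b r ≠ 0 ∧
        c = ‖T b‖ ^ 2 / |inner ℝ b r| ^ (2 * (1 / β))} := by
  set u := ‖r‖⁻¹ • r
  have hu : ‖u‖ = 1 := norm_smul_inv_norm hr
  have hur : inner ℝ u r = ‖r‖ := by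
    rw [real_inner_smul_left, real_inner_self_eq_norm_sq]
    field_simp [norm_ne_zero_iff.2 hr]
  have hC0 : 0 < C := by
    have h := hC u hu.le
    rw [hur, abs_of_pos (norm_pos_iff.2 hr)] at h
    exact pos_of_mul_pos_left ((norm_pos_iff.2 hr).trans_le h) (by positivity)
  have hlb : ∀ c ∈ {c : ℝ | ∃ b : H, ‖b‖ ≤ 1 ∧ inner ℝ b r ≠ 0 ∧
      c = ‖T b‖ ^ 2 / |inner ℝ b r| ^ (2 * (1 / β))}, (C ^ (2 * (1 / β)))⁻¹ ≤ c := by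
    rintro c ⟨b, hb, hbr, rfl⟩
    have hpos : 0 < |inner ℝ b r| ^ (2 * (1 / β)) := rpow_pos_of_pos (abs_pos.2 hbr) _
    have key : |inner ℝ b r| ^ (2 * (1 / β)) ≤ C ^ (2 * (1 / β)) * ‖T b‖ ^ 2 :=
      calc |inner ℝ b r| ^ (2 * (1 / β)) ≤ (C * ‖T b‖ ^ β) ^ (2 * (1 / β)) :=
            rpow_le_rpow (abs_nonneg _) (hC b hb) (by positivity)
        _ = C ^ (2 * (1 / β)) * ‖T b‖ ^ 2 := by
            rw [mul_rpow hC0.le (by positivity), ← rpow_mul (norm_nonneg _),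
              show β * (2 * (1 / β)) = 2 by field_simp, rpow_two]
    rwa [le_div_iff₀ hpos, inv_mul_le_iff₀ (by positivity)]
  refine (inv_pos.2 (rpow_pos_of_pos hC0 _)).trans_le (le_csInf ⟨_, u, hu.le, ?_, rfl⟩ hlb)
  rw [hur]
  exact norm_ne_zero_iff.2 hr

theorem stmt9_general {H L : Type*} [NormedAddCommGroup H] [InnerProductSpace ℝ H] [CompleteSpace H]
    [NormedAddCommGroup L] [InnerProductSpace ℝ L] [CompleteSpace L]
    (S : H →L[ℝ] L)
    (lam : ℕ → ℝ) (φv : ℕ → H) (ψv : ℕ → L)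
    (hlam : ∀ j, 0 < lam j)
    (hSψ : ∀ j, ContinuousLinearMap.adjoint S (ψv j) = lam j • φv j)
    (hONφ : Orthonormal ℝ φv) (hONψ : Orthonormal ℝ ψv)
    (hbasis : (Submodule.span ℝ (Set.range φv)).topologicalClosure =
      (LinearMap.range ((ContinuousLinearMap.adjoint S : L →L[ℝ] H) : L →ₗ[ℝ] H)).topologicalClosure)
    (β : ℝ) (hβ0 : 0 < β) (hβ1 : β ≤ 1)
    (r : H) (hr0 : r ≠ 0)
    (hr : r ∈ closure ((LinearMap.range ((ContinuousLinearMap.adjoint S : L →L[ℝ] H) : L →ₗ[ℝ] H) : Submodule ℝ H) : Set H))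
    (hsum : Summable (fun j => lam j ^ (-(2 * β)) * (inner ℝ r (φv j) : ℝ) ^ 2)) :
    (∀ b : H, ‖b‖ ≤ 1 → |(inner ℝ b r : ℝ)| ≤
        Real.sqrt (∑' j, lam j ^ (-(2 * β)) * (inner ℝ r (φv j) : ℝ) ^ 2) * ‖S b‖ ^ β) ∧
      0 < sInf {c : ℝ | ∃ b : H, ‖b‖ ≤ 1 ∧ (inner ℝ b r : ℝ) ≠ 0 ∧
        c = ‖S b‖ ^ 2 / |(inner ℝ b r : ℝ)| ^ (2 * (1 / β))} := by
  have hrφ : r ∈ (Submodule.span ℝ (Set.range φv)).topologicalClosure := by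
    rwa [hbasis, ← SetLike.mem_coe, Submodule.topologicalClosure_coe]
  have hbound : ∀ b : H, ‖b‖ ≤ 1 → |inner ℝ b r| ≤
      √(∑' j, lam j ^ (-(2 * β)) * inner ℝ r (φv j) ^ 2) * ‖S b‖ ^ β := fun b hb => by
    refine (abs_inner_le_sqrt_tsum_mul_rpow_mul_rpow hlam hSψ hONφ hONψ hβ0 hβ1 hrφ hsum b).trans ?_
    gcongr
    exact mul_le_of_le_one_right (by positivity)
      (rpow_le_one (norm_nonneg b) hb (sub_nonneg.2 hβ1))
  exact ⟨hbound, sInf_pos_of_abs_inner_le_mul_rpow S hr0 hβ0 hbound⟩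

/-- Source-condition bound: if `‖r‖_β² = Σ_j λ_j^{-2β} ⟨r, φ_j⟩² < ∞` for `0 < β ≤ 1`,
then `|⟨b, r⟩| ≤ ‖r‖_β ‖Sb‖^β` for all `‖b‖ ≤ 1`; in particular the generalized
information `I_{φ,ρ}` with `ρ = 1/β` is positive. -/
theorem stmt9 {H L : Type*} [NormedAddCommGroup H] [InnerProductSpace ℝ H] [CompleteSpace H]
    [NormedAddCommGroup L] [InnerProductSpace ℝ L] [CompleteSpace L]
    (S : H →L[ℝ] L) (hS : IsCompactOperator (S : H → L))
    (lam : ℕ → ℝ) (φv : ℕ → H) (ψv : ℕ → L)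
    (hlam : ∀ j, 0 < lam j)
    (hSφ : ∀ j, S (φv j) = lam j • ψv j)
    (hSψ : ∀ j, ContinuousLinearMap.adjoint S (ψv j) = lam j • φv j)
    (hONφ : Orthonormal ℝ φv) (hONψ : Orthonormal ℝ ψv)
    (hbasis : (Submodule.span ℝ (Set.range φv)).topologicalClosure =
      (LinearMap.range ((ContinuousLinearMap.adjoint S : L →L[ℝ] H) : L →ₗ[ℝ] H)).topologicalClosure)
    (β : ℝ) (hβ0 : 0 < β) (hβ1 : β ≤ 1)
    (r : H) (hr0 : r ≠ 0)
    (hr : r ∈ closure ((LinearMap.range ((ContinuousLinearMap.adjoint S : L →L[ℝ] H) : L →ₗ[ℝ] H) : Submodule ℝ H) : Set H))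
    (hsum : Summable (fun j => lam j ^ (-(2 * β)) * (inner ℝ r (φv j) : ℝ) ^ 2)) :
    (∀ b : H, ‖b‖ ≤ 1 → |(inner ℝ b r : ℝ)| ≤
        Real.sqrt (∑' j, lam j ^ (-(2 * β)) * (inner ℝ r (φv j) : ℝ) ^ 2) * ‖S b‖ ^ β) ∧
      0 < sInf {c : ℝ | ∃ b : H, ‖b‖ ≤ 1 ∧ (inner ℝ b r : ℝ) ≠ 0 ∧
        c = ‖S b‖ ^ 2 / |(inner ℝ b r : ℝ)| ^ (2 * (1 / β))} :=
  stmt9_general S lam φv ψv hlam hSψ hONφ hONψ hbasis β hβ0 hβ1 r hr0 hr hsum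
end

section
/- Let A : E → E be a compact operator on a Hilbert space E with adjoint A*, let θ₀ > 0, and suppose g₀ ∈ E satisfies θ₀ A*g₀ = g₀ (g₀ is an eigenfunction of A* with eigenvalue 1/θ₀). Let η₀ ∈ E with ⟨η₀, g₀⟩ ≠ 0. Define the operator S : ℝ × E → E by S(b_θ, b_η) = b_θ · Aη₀ + (θ₀ A b_η − b_η). Then there exists g ∈ E with ⟨Aη₀, g⟩ = 1 and θ₀ A*g − g = 0; consequently the functional (b_θ, b_η) ↦ b_θ is continuous with respect to the seminorm ‖S(b_θ,b_η)‖, i.e., |b_θ| ≤ ‖g‖·‖S(b_θ,b_η)‖ for all (b_θ, b_η). -/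
/-!
Since `θ₀ A* g₀ = g₀`, the vector `g₀` is orthogonal to the range of `θ₀ A - 1` and
`θ₀ ⟪Aη₀, g₀⟫ = ⟪η₀, g₀⟫ ≠ 0`, so `g₀` can be rescaled to `g` with `⟪Aη₀, g⟫ = 1`.
Pairing `S(b_θ, b_η)` with `g` then returns `b_θ`, and Cauchy–Schwarz gives the bound.
-/

open ContinuousLinearMap

section

variable {E : Type*} [NormedAddCommGroup E] [InnerProductSpace ℝ E]

theorem abs_le_norm_mul_norm_smul_add {v w g : E} (hv : (inner ℝ v g : ℝ) = 1)
    (hw : (inner ℝ w g : ℝ) = 0) (b : ℝ) : |b| ≤ ‖g‖ * ‖b • v + w‖ := by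
  have hb : (inner ℝ (b • v + w) g : ℝ) = b := by
    rw [inner_add_left, real_inner_smul_left, hv, hw, mul_one, add_zero]
  calc |b| = |(inner ℝ (b • v + w) g : ℝ)| := by rw [hb]
    _ ≤ ‖b • v + w‖ * ‖g‖ := abs_real_inner_le_norm _ _
    _ = ‖g‖ * ‖b • v + w‖ := mul_comm _ _

variable [CompleteSpace E]

theorem inner_smul_apply_sub_self_left (A : E →L[ℝ] E) (θ : ℝ) (x g : E) :
    (inner ℝ (θ • A x - x) g : ℝ) = inner ℝ x (θ • adjoint A g - g) := by
  rw [inner_sub_left, inner_sub_right, real_inner_smul_left, real_inner_smul_right,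
    adjoint_inner_right]

theorem smul_inner_apply_eq_of_smul_adjoint_eq {A : E →L[ℝ] E} {θ : ℝ} {g : E}
    (hg : θ • adjoint A g = g) (η : E) :
    θ * (inner ℝ (A η) g : ℝ) = inner ℝ η g := by
  rw [← adjoint_inner_right, ← real_inner_smul_right, hg]

end

theorem stmt17_general {E : Type*} [NormedAddCommGroup E] [InnerProductSpace ℝ E] [CompleteSpace E]
    (A : E →L[ℝ] E)
    (θ₀ : ℝ) (g₀ η₀ : E)
    (hg₀ : θ₀ • ContinuousLinearMap.adjoint A g₀ = g₀)
    (hη : (inner ℝ η₀ g₀ : ℝ) ≠ 0) :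
    ∃ g : E, (inner ℝ (A η₀) g : ℝ) = 1 ∧ θ₀ • ContinuousLinearMap.adjoint A g - g = 0 ∧
      ∀ (bθ : ℝ) (bη : E), |bθ| ≤ ‖g‖ * ‖bθ • A η₀ + (θ₀ • A bη - bη)‖ := by
  have hAη : (inner ℝ (A η₀) g₀ : ℝ) ≠ 0 := by
    intro h
    apply hη
    rw [← smul_inner_apply_eq_of_smul_adjoint_eq hg₀, h, mul_zero]
  set g := (inner ℝ (A η₀) g₀ : ℝ)⁻¹ • g₀
  have hnorm : (inner ℝ (A η₀) g : ℝ) = 1 := by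
    rw [real_inner_smul_right, inv_mul_cancel₀ hAη]
  have hfixed : θ₀ • adjoint A g - g = 0 := by
    rw [map_smul, smul_comm, ← smul_sub, hg₀, sub_self, smul_zero]
  refine ⟨g, hnorm, hfixed, fun bθ bη => abs_le_norm_mul_norm_smul_add hnorm ?_ bθ⟩
  rw [inner_smul_apply_sub_self_left, hfixed, inner_zero_right]

/-- Euler equation (Proposition 11): if `g₀` is an eigenfunction of `A*` with eigenvalue
`1/θ₀` (i.e. `θ₀ A* g₀ = g₀`) and `⟨η₀, g₀⟩ ≠ 0`, then there is `g` with `⟨Aη₀, g⟩ = 1`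
and `θ₀ A* g − g = 0`, so that `|b_θ| ≤ ‖g‖ ‖S(b_θ, b_η)‖` for the score
`S(b_θ, b_η) = b_θ Aη₀ + (θ₀ A b_η − b_η)`. -/
theorem stmt17 {E : Type*} [NormedAddCommGroup E] [InnerProductSpace ℝ E] [CompleteSpace E]
    (A : E →L[ℝ] E) (hA : IsCompactOperator (A : E → E))
    (θ₀ : ℝ) (hθ : 0 < θ₀) (g₀ η₀ : E)
    (hg₀ : θ₀ • ContinuousLinearMap.adjoint A g₀ = g₀)
    (hη : (inner ℝ η₀ g₀ : ℝ) ≠ 0) :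
    ∃ g : E, (inner ℝ (A η₀) g : ℝ) = 1 ∧ θ₀ • ContinuousLinearMap.adjoint A g - g = 0 ∧
      ∀ (bθ : ℝ) (bη : E), |bθ| ≤ ‖g‖ * ‖bθ • A η₀ + (θ₀ • A bη - bη)‖ :=
  stmt17_general A θ₀ g₀ η₀ hg₀ hη
end

section
/- Counterexample (nonlinear model): Let H = ℓ²-type space of real sequences λ with weights p_j > 0, Σp_j = 1, and let f : ℝ → ℝ be bounded, twice continuously differentiable with bounded second derivative, f(x) = 0 iff x ∈ {0,1}, and f'(0) = 1. Define φ(λ) = Σ_j f(λ_j) p_j and the sequences α^k with zeros in the first k coordinates and ones thereafter. Then: (a) the derivative of φ at 0 is φ̇(b) = Σ_j b_j p_j and satisfies |φ̇(b)|² ≤ Σ_j b_j² p_j, so the information I_φ ≥ 1; yet (b) φ(α^k) = 0 = φ(0) while α^k ≠ 0, so φ is not identified from the model m(λ) = (f(λ_j))_j (since m(α^k) = 0 = m(0)). -/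
/-!
For probability weights `w`, the inequality `(∑ b w)² ≤ ∑ b² w` is the nonnegativity of the
variance `∑ (b - c)² w` with `c = ∑ b w`. Identification fails because `f` vanishes at both `0`
and `1`, so every `0/1`-valued sequence, e.g. `α^k`, is sent to the zero sequence.
-/

section WeightedSums

variable {w b : ℕ → ℝ}

lemma summable_of_tsum_eq_one (hw1 : ∑' j, w j = 1) : Summable w := by
  by_contra h
  simp [tsum_eq_zero_of_not_summable h] at hw1

lemma summable_mul_of_summable_sq_mul (hw : ∀ j, 0 ≤ w j) (hws : Summable w)
    (hb : Summable fun j => b j ^ 2 * w j) : Summable fun j => b j * w j := by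
  refine ((hb.add hws).div_const 2).of_norm_bounded fun j => ?_
  rw [Real.norm_eq_abs, abs_mul, abs_of_nonneg (hw j)]
  have hbj : |b j| ≤ (b j ^ 2 + 1) / 2 := by
    nlinarith [sq_nonneg (|b j| - 1), sq_abs (b j)]
  nlinarith [mul_le_mul_of_nonneg_right hbj (hw j)]

theorem sq_tsum_mul_le_tsum_sq_mul (hw : ∀ j, 0 ≤ w j) (hw1 : ∑' j, w j = 1)
    (hb : Summable fun j => b j ^ 2 * w j) :
    (∑' j, b j * w j) ^ 2 ≤ ∑' j, b j ^ 2 * w j := by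
  have hws := summable_of_tsum_eq_one hw1
  set c := ∑' j, b j * w j
  have hvar : HasSum (fun j => b j ^ 2 * w j - 2 * c * (b j * w j) + c ^ 2 * w j)
      ((∑' j, b j ^ 2 * w j) - 2 * c * c + c ^ 2 * 1) := by
    refine (hb.hasSum.sub (HasSum.mul_left (2 * c) ?_)).add (hw1 ▸ hws.hasSum.mul_left (c ^ 2))
    exact (summable_mul_of_summable_sq_mul hw hws hb).hasSum
  have hvar_nonneg := hvar.nonneg fun j => by
    have : b j ^ 2 * w j - 2 * c * (b j * w j) + c ^ 2 * w j = (b j - c) ^ 2 * w j := by ring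
    exact this ▸ mul_nonneg (sq_nonneg _) (hw j)
  linarith

end WeightedSums

theorem stmt19_general (p : ℕ → ℝ) (hp : ∀ j, 0 < p j) (hp1 : ∑' j, p j = 1)
    (f : ℝ → ℝ)
    (hfz : ∀ x, f x = 0 ↔ x = 0 ∨ x = 1) :
    (∀ b : ℕ → ℝ, Summable (fun j => (b j) ^ 2 * p j) →
        (∑' j, b j * p j) ^ 2 ≤ ∑' j, (b j) ^ 2 * p j) ∧
      ∀ k : ℕ,
        (∑' j : ℕ, f (if j < k then (0 : ℝ) else 1) * p j) = 0 ∧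
        (fun j : ℕ => if j < k then (0 : ℝ) else 1) ≠ (fun _ => 0) ∧
        ∀ j : ℕ, f (if j < k then (0 : ℝ) else 1) = 0 := by
  refine ⟨fun b => sq_tsum_mul_le_tsum_sq_mul (fun j => (hp j).le) hp1, fun k => ?_⟩
  have hm : ∀ j : ℕ, f (if j < k then (0 : ℝ) else 1) = 0 := fun j =>
    (hfz _).2 (by split_ifs <;> simp)
  refine ⟨by simp only [hm, zero_mul, tsum_zero], fun h => ?_, hm⟩
  simpa using congrFun h k

/-- Counterexample: positive Fisher information does not imply identification in a
nonlinear model. With weights `p_j > 0`, `Σ p_j = 1`, and `f` bounded, `C²` with bounded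
second derivative, `f(x) = 0 ↔ x ∈ {0,1}`, `f'(0) = 1`, the functional
`φ(λ) = Σ_j f(λ_j) p_j` has derivative `φ̇(b) = Σ_j b_j p_j` at `0` satisfying the
Cauchy–Schwarz bound `(Σ_j b_j p_j)² ≤ Σ_j b_j² p_j` (so `I_φ ≥ 1`), yet for each `k`
the sequence `α^k` (zeros in the first `k` coordinates, ones thereafter) is nonzero with
`φ(α^k) = 0 = φ(0)` and `m(α^k) = 0 = m(0)` coordinatewise. -/
theorem stmt19 (p : ℕ → ℝ) (hp : ∀ j, 0 < p j) (hps : Summable p) (hp1 : ∑' j, p j = 1)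
    (f : ℝ → ℝ)
    (hfb : ∃ M, ∀ x, |f x| ≤ M)
    (hf2 : ContDiff ℝ 2 f)
    (hf2b : ∃ M, ∀ x, |iteratedDeriv 2 f x| ≤ M)
    (hfz : ∀ x, f x = 0 ↔ x = 0 ∨ x = 1)
    (hf'0 : deriv f 0 = 1) :
    (∀ b : ℕ → ℝ, Summable (fun j => (b j) ^ 2 * p j) →
        (∑' j, b j * p j) ^ 2 ≤ ∑' j, (b j) ^ 2 * p j) ∧
      ∀ k : ℕ,
        (∑' j : ℕ, f (if j < k then (0 : ℝ) else 1) * p j) = 0 ∧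
        (fun j : ℕ => if j < k then (0 : ℝ) else 1) ≠ (fun _ => 0) ∧
        ∀ j : ℕ, f (if j < k then (0 : ℝ) else 1) = 0 :=
  stmt19_general p hp hp1 f hfz
end
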